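/- arXiv:2207.04321 — 2 statements merged into one kernel-verified Lean document; each statement's English description precedes it below -/
import Mathlib

section
/- Let G=(V,E) be a strongly biconnected directed graph on a finite vertex set with n = |V| vertices. Then there exists a spanning subgraph (V,H) with H ⊆ E such that (V,H) is strongly biconnected and |H| ≤ 3(n-1). -/
/-- Directed reachability: there is a directed path from `u` to `v`
using edges of `H`. -/
def DPath {V : Type*} (H : Finset (V × V)) (u v : V) : Prop :=
  Relation.ReflTransGen (fun a b => (a, b) ∈ H) u v

/-- A directed graph (given by its edge set `H ⊆ V × V`) is strongly connected
if every vertex reaches every other vertex by a directed path. -/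
def StronglyConnected {V : Type*} (H : Finset (V × V)) : Prop :=
  ∀ u v : V, DPath H u v

/-- The underlying undirected simple graph of a directed graph: `u ~ w` (for `u ≠ w`)
whenever `(u,w)` or `(w,u)` is a directed edge. -/
def underlying {V : Type*} (H : Finset (V × V)) : SimpleGraph V where
  Adj u w := u ≠ w ∧ ((u, w) ∈ H ∨ (w, u) ∈ H)
  symm := ⟨fun u w ⟨h1, h2⟩ => ⟨h1.symm, h2.symm⟩⟩
  loopless := ⟨fun v h => h.1 rfl⟩

/-- `a` is an articulation point of the undirected graph `G` if deleting `a`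
(and its incident edges) leaves a graph that is not connected. -/
def IsArticulationPoint {V : Type*} (G : SimpleGraph V) (a : V) : Prop :=
  ¬ (G.induce {v : V | v ≠ a}).Connected

/-- An undirected graph is 2-vertex-connected if it is connected and has
no articulation point. -/
def TwoVertexConnected {V : Type*} (G : SimpleGraph V) : Prop :=
  G.Connected ∧ ∀ a : V, ¬ IsArticulationPoint G a

/-- A directed graph is strongly biconnected if it is strongly connected and
its underlying undirected graph has no articulation point. -/
def StronglyBiconnected {V : Type*} (H : Finset (V × V)) : Prop :=
  StronglyConnected H ∧ ∀ a : V, ¬ IsArticulationPoint (underlying H) a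


/-!
Take an out-branching `T⁺` and an in-branching `T⁻` of `E` at a common root; their union is
strongly connected and has at most `2(n-1)` edges. Then add edges of `E` greedily: while the
underlying graph of the current `H` has an articulation point `a`, some edge of `E` joins two
components of `H - a`, because `E - a` is connected. The potential `∑ₐ c(H - a)`, where `c`
counts components, never increases when edges are added, drops with each greedy edge, and equals
`n` at the end. As the underlying graph of `T⁺` is connected, every component of `T⁺ - a`
contains a neighbour of `a`, so the initial potential is at most `∑ₐ deg a ≤ 2|T⁺| ≤ 2(n-1)`.
Hence at most `n - 2` edges are added, `3n - 4` in total.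
-/

open Finset Relation

namespace SimpleGraph

variable {V : Type*} {G G' : SimpleGraph V}

noncomputable def numComponentsDelete (G : SimpleGraph V) (a : V) : ℕ :=
  Nat.card (G.induce {v | v ≠ a}).ConnectedComponent

theorem ConnectedComponent.card_lt_card_of_le [Finite V] (h : G ≤ G') {u v : V}
    (huv : G'.Reachable u v) (hnuv : ¬ G.Reachable u v) :
    Nat.card G'.ConnectedComponent < Nat.card G.ConnectedComponent := by
  have := Fintype.ofFinite G.ConnectedComponent
  have := Fintype.ofFinite G'.ConnectedComponent
  simp only [Nat.card_eq_fintype_card]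
  refine Fintype.card_lt_of_surjective_not_injective _ (surjective_map_ofLE h) fun hinj => hnuv ?_
  exact ConnectedComponent.exact (hinj (ConnectedComponent.sound huv))

theorem exists_adj_not_reachable (hG' : G'.Preconnected) (hG : ¬ G.Preconnected) :
    ∃ u v, G'.Adj u v ∧ ¬ G.Reachable u v := by
  obtain ⟨x, y, hxy⟩ : ∃ x y, ¬ G.Reachable x y := by simpa [Preconnected] using hG
  obtain ⟨d, -, hx, hy⟩ := (hG' x y).some.exists_boundary_dart {w | G.Reachable x w} .rfl hxy
  exact ⟨d.fst, d.snd, d.adj, fun h => hy (Reachable.trans hx h)⟩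

theorem numComponentsDelete_anti [Finite V] (h : G ≤ G') (a : V) :
    G'.numComponentsDelete a ≤ G.numComponentsDelete a :=
  ConnectedComponent.card_le_card_of_le (comap_monotone _ h)

theorem numComponentsDelete_eq_one {a : V} (h : (G.induce {v | v ≠ a}).Connected) :
    G.numComponentsDelete a = 1 :=
  have := h.preconnected.subsingleton_connectedComponent
  have := h.nonempty
  Nat.card_unique

theorem exists_adj_reachable_induce_ne (hG : G.Preconnected) {a v : V} (hv : v ≠ a) :
    ∃ u, ∃ hu : u ≠ a, G.Adj a u ∧ (G.induce {x | x ≠ a}).Reachable ⟨u, hu⟩ ⟨v, hv⟩ := by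
  obtain ⟨d, -, ⟨hfst, hreach⟩, hsnd⟩ := (hG v a).some.exists_boundary_dart
    {w | ∃ hw : w ≠ a, (G.induce {x | x ≠ a}).Reachable ⟨v, hv⟩ ⟨w, hw⟩} ⟨hv, .rfl⟩
    fun ⟨h, _⟩ => h rfl
  by_cases hsa : d.snd = a
  · exact ⟨d.fst, hfst, hsa ▸ d.adj.symm, hreach.symm⟩
  · exact absurd ⟨hsa, hreach.trans (induce_adj.mpr d.adj).reachable⟩ hsnd

theorem numComponentsDelete_le_degree [Fintype V] [DecidableRel G.Adj] (hG : G.Preconnected)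
    (a : V) : G.numComponentsDelete a ≤ G.degree a := by
  rw [← card_neighborSet_eq_degree, ← Nat.card_eq_fintype_card]
  refine Nat.card_le_card_of_surjective
    (fun u : G.neighborSet a => (G.induce _).connectedComponentMk ⟨u, u.2.ne'⟩) ?_
  rintro ⟨v, hv⟩
  obtain ⟨u, hu, hau, hreach⟩ := exists_adj_reachable_induce_ne hG hv
  exact ⟨⟨u, hau⟩, ConnectedComponent.sound hreach⟩

theorem sum_numComponentsDelete_le [Fintype V] [DecidableRel G.Adj] (hG : G.Preconnected) :
    ∑ a, G.numComponentsDelete a ≤ 2 * #G.edgeFinset :=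
  (sum_le_sum fun a _ => numComponentsDelete_le_degree hG a).trans_eq
    G.sum_degrees_eq_twice_card_edges

end SimpleGraph

open SimpleGraph

section

variable {V : Type*}

namespace DPath

variable {H H' : Finset (V × V)} {u v w : V}

theorem mono (hHH' : H ⊆ H') (h : DPath H u v) : DPath H' u v :=
  ReflTransGen.mono (fun _ _ hab => hHH' hab) _ _ h

theorem trans (huv : DPath H u v) (hvw : DPath H v w) : DPath H u w :=
  ReflTransGen.trans huv hvw

theorem exists_mem_not_mem {S : Set V} (h : DPath H u v) (hu : u ∈ S) (hv : v ∉ S) :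
    ∃ a ∈ S, ∃ b ∉ S, (a, b) ∈ H := by
  induction h with
  | refl => exact absurd hu hv
  | @tail b c _ hbc ih =>
    by_cases hb : b ∈ S
    · exact ⟨b, hb, c, hv, hbc⟩
    · exact ih hb

theorem reachable_underlying (h : DPath H u v) : (underlying H).Reachable u v := by
  induction h with
  | refl => rfl
  | @tail b c _ hbc ih =>
    by_cases hb : b = c
    · exact hb ▸ ih
    · exact ih.trans (Adj.reachable ⟨hb, .inl hbc⟩)

theorem image_swap_iff [DecidableEq V] : DPath (H.image Prod.swap) u v ↔ DPath H v u := by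
  have : (fun a b => (a, b) ∈ H.image Prod.swap) = Function.swap fun a b => (a, b) ∈ H := by
    ext a b
    simp [Function.swap]
  rw [DPath, DPath, this, reflTransGen_swap]

end DPath

theorem exists_outBranching_of_partial [Fintype V] [DecidableEq V] {E T : Finset (V × V)} {r : V}
    (hE : ∀ v, DPath E r v) (S : Finset V) (hrS : r ∈ S) (hTE : T ⊆ E)
    (hT : ∀ v ∈ S, DPath T r v) (hcard : #T < #S) :
    ∃ T' ⊆ E, #T' < Fintype.card V ∧ ∀ v, DPath T' r v := by
  by_cases hS : S = univ
  · subst hS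
    exact ⟨T, hTE, by simpa using hcard, fun v => hT v (mem_univ v)⟩
  obtain ⟨w, hw⟩ : ∃ w, w ∉ S := by simpa [eq_univ_iff_forall] using hS
  obtain ⟨a, ha, b, hb, hab⟩ := (hE w).exists_mem_not_mem (S := S) hrS hw
  have hreach : ∀ v ∈ insert b S, DPath (insert (a, b) T) r v := by
    intro v hv
    rcases mem_insert.mp hv with rfl | hv
    · exact ReflTransGen.tail ((hT a ha).mono (subset_insert _ _)) (mem_insert_self _ _)
    · exact (hT v hv).mono (subset_insert _ _)
  have : #(Sᶜ.erase b) < #Sᶜ := card_erase_lt_of_mem (mem_compl.mpr hb)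
  refine exists_outBranching_of_partial hE (insert b S) (mem_insert_of_mem hrS)
    (insert_subset hab hTE) hreach ?_
  rw [card_insert_of_notMem hb]
  exact (card_insert_le _ _).trans_lt (by omega)
termination_by Sᶜ.card

theorem exists_outBranching [Fintype V] {E : Finset (V × V)} {r : V} (hE : ∀ v, DPath E r v) :
    ∃ T ⊆ E, #T < Fintype.card V ∧ ∀ v, DPath T r v := by
  classical
  exact exists_outBranching_of_partial hE {r} (mem_singleton_self r) (empty_subset E)
    (fun v hv => mem_singleton.mp hv ▸ .refl) (by simp)

theorem exists_inBranching [Fintype V] {E : Finset (V × V)} {r : V} (hE : ∀ v, DPath E v r) :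
    ∃ T ⊆ E, #T < Fintype.card V ∧ ∀ v, DPath T v r := by
  classical
  obtain ⟨T, hTE, hcard, hT⟩ :=
    exists_outBranching (E := E.image Prod.swap) fun v => DPath.image_swap_iff.mpr (hE v)
  refine ⟨T.image Prod.swap, ?_, card_image_le.trans_lt hcard,
    fun v => DPath.image_swap_iff.mpr (hT v)⟩
  intro e he
  obtain ⟨f, hf, rfl⟩ := mem_image.mp he
  obtain ⟨g, hg, rfl⟩ := mem_image.mp (hTE hf)
  simpa using hg

theorem underlying_mono {H H' : Finset (V × V)} (h : H ⊆ H') : underlying H ≤ underlying H' :=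
  fun _ _ huw => ⟨huw.1, huw.2.imp (@h _) (@h _)⟩

theorem card_edgeFinset_underlying_le (H : Finset (V × V)) [Fintype (underlying H).edgeSet] :
    #(underlying H).edgeFinset ≤ #H := by
  refine card_le_card_of_surjOn (fun p => s(p.1, p.2)) ?_
  intro e he
  induction e with
  | _ u w =>
    rcases (mem_edgeFinset.mp he).2 with h | h
    · exact ⟨(u, w), h, rfl⟩
    · exact ⟨(w, u), h, Sym2.eq_swap⟩

theorem sum_numComponentsDelete_underlying_le [Fintype V] {T : Finset (V × V)} {r : V}
    (hT : ∀ v, DPath T r v) :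
    ∑ a, (underlying T).numComponentsDelete a ≤ 2 * #T := by
  classical
  have hpre : (underlying T).Preconnected := fun u v =>
    (hT u).reachable_underlying.symm.trans (hT v).reachable_underlying
  calc ∑ a, (underlying T).numComponentsDelete a ≤ 2 * #(underlying T).edgeFinset :=
        sum_numComponentsDelete_le hpre
    _ ≤ 2 * #T := by gcongr; exact card_edgeFinset_underlying_le T

theorem exists_numComponentsDelete_insert_lt [Finite V] [DecidableEq V] {E H : Finset (V × V)}
    {a : V} (hH : IsArticulationPoint (underlying H) a)
    (hE : ¬ IsArticulationPoint (underlying E) a) :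
    ∃ e ∈ E, (underlying (insert e H)).numComponentsDelete a
      < (underlying H).numComponentsDelete a := by
  rw [IsArticulationPoint, not_not] at hE
  have hHpre : ¬ ((underlying H).induce {v | v ≠ a}).Preconnected := fun h =>
    hH ((connected_iff _).mpr ⟨h, hE.nonempty⟩)
  obtain ⟨c, d, hcd, hnreach⟩ := exists_adj_not_reachable hE.preconnected hHpre
  have key : ∀ e, (underlying (insert e H)).Adj c d →
      (underlying (insert e H)).numComponentsDelete a < (underlying H).numComponentsDelete a :=
    fun e hadj =>
      ConnectedComponent.card_lt_card_of_le (comap_monotone _ (underlying_mono (subset_insert e H)))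
        (induce_adj.mpr hadj).reachable hnreach
  rcases induce_adj.mp hcd with ⟨hne, hcd | hdc⟩
  · exact ⟨_, hcd, key _ ⟨hne, .inl (mem_insert_self _ _)⟩⟩
  · exact ⟨_, hdc, key _ ⟨hne, .inr (mem_insert_self _ _)⟩⟩

theorem exists_superset_forall_not_isArticulationPoint [Fintype V] [DecidableEq V]
    {E H : Finset (V × V)} (hHE : H ⊆ E) (hE : ∀ a, ¬ IsArticulationPoint (underlying E) a) :
    ∃ H', H ⊆ H' ∧ H' ⊆ E ∧ (∀ a, ¬ IsArticulationPoint (underlying H') a) ∧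
      #H' + Fintype.card V ≤ #H + ∑ a, (underlying H).numComponentsDelete a := by
  by_cases hH : ∀ a, ¬ IsArticulationPoint (underlying H) a
  · have : ∑ a, (underlying H).numComponentsDelete a = Fintype.card V := by
      simp [numComponentsDelete_eq_one (not_not.mp (hH _))]
    exact ⟨H, subset_rfl, hHE, hH, by omega⟩
  push Not at hH
  obtain ⟨a, ha⟩ := hH
  obtain ⟨e, heE, hlt⟩ := exists_numComponentsDelete_insert_lt ha (hE a)
  have : ∑ b, (underlying (insert e H)).numComponentsDelete b
      < ∑ b, (underlying H).numComponentsDelete b :=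
    sum_lt_sum (fun b _ => numComponentsDelete_anti (underlying_mono (subset_insert e H)) b)
      ⟨a, mem_univ a, hlt⟩
  obtain ⟨H', hH', hH'E, hart, hcard⟩ :=
    exists_superset_forall_not_isArticulationPoint (insert_subset heE hHE) hE
  exact ⟨H', (subset_insert e H).trans hH', hH'E, hart, by have := card_insert_le e H; omega⟩
termination_by ∑ a, (underlying H).numComponentsDelete a

end

/-- Every strongly biconnected directed graph on $n$ vertices has a strongly
biconnected spanning subgraph with at most $3(n-1)$ edges. -/
theorem stmt_5 {V : Type*} [Fintype V] (E : Finset (V × V))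
    (hG : StronglyBiconnected E) :
    ∃ H ⊆ E, StronglyBiconnected H ∧ H.card ≤ 3 * (Fintype.card V - 1) := by
  classical
  obtain ⟨hE, hEart⟩ := hG
  cases isEmpty_or_nonempty V with
  | inl _ => exact ⟨∅, empty_subset E, ⟨isEmptyElim, isEmptyElim⟩, by simp⟩
  | inr hV =>
    obtain ⟨r⟩ := hV
    obtain ⟨Tout, hToutE, hToutcard, hTout⟩ := exists_outBranching (hE r)
    obtain ⟨Tin, hTinE, hTincard, hTin⟩ := exists_inBranching fun v => hE v r
    obtain ⟨H, hH₀H, hHE, hHart, hHcard⟩ :=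
      exists_superset_forall_not_isArticulationPoint (union_subset hToutE hTinE) hEart
    have hHsc : StronglyConnected H := fun u v =>
      ((hTin u).mono subset_union_right |>.trans ((hTout v).mono subset_union_left)).mono hH₀H
    have hpot : ∑ a, (underlying (Tout ∪ Tin)).numComponentsDelete a ≤ 2 * #Tout :=
      (sum_le_sum fun a _ => numComponentsDelete_anti (underlying_mono subset_union_left) a).trans
        (sum_numComponentsDelete_underlying_le hTout)
    have := card_union_le Tout Tin
    exact ⟨H, hHE, ⟨hHsc, hHart⟩, by omega⟩
end

section
/- Let G=(V,E) be a strongly biconnected directed graph on a finite vertex set with n = |V| ≥ 3 vertices and no self-loops. Then G has a strongly biconnected spanning subgraph (V,H), H ⊆ E, with exactly n edges if and only if G has a Hamiltonian directed cycle, i.e., a directed cycle using edges of E that visits every vertex of V exactly once. -/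
open Function in
theorem Function.exists_zmod_equiv_iterate_of_forall_exists_iterate_eq {α : Type*} [Fintype α]
    [Nonempty α] (f : α → α) (hf : ∀ x y, ∃ m, f^[m] x = y) :
    ∃ e : ZMod (Fintype.card α) ≃ α, ∀ i, e (i + 1) = f (e i) := by
  obtain ⟨x⟩ := ‹Nonempty α›
  obtain ⟨m, hm⟩ := hf (f x) x
  have hpos : 0 < minimalPeriod f x :=
    IsPeriodicPt.minimalPeriod_pos m.succ_pos (by rwa [IsPeriodicPt, IsFixedPt, iterate_succ_apply])
  have hsurj : Surjective fun k : Fin (minimalPeriod f x) => f^[k] x := fun y =>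
    let ⟨k, hk⟩ := hf x y
    ⟨⟨k % minimalPeriod f x, Nat.mod_lt k hpos⟩, by simp only [iterate_mod_minimalPeriod_eq, hk]⟩
  have hcard : minimalPeriod f x = Fintype.card α :=
    minimalPeriod_le_card.antisymm (by simpa using Fintype.card_le_of_surjective _ hsurj)
  have hmod (k : ℕ) : f^[k % Fintype.card α] x = f^[k] x := hcard ▸ iterate_mod_minimalPeriod_eq
  have : NeZero (Fintype.card α) := ⟨Fintype.card_ne_zero⟩
  have hinj : Injective fun i : ZMod (Fintype.card α) => f^[i.val] x := fun i j h =>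
    ZMod.val_injective _ <| iterate_injOn_Iio_minimalPeriod
      (by simpa [hcard] using i.val_lt) (by simpa [hcard] using j.val_lt) h
  refine ⟨.ofBijective _ ((Fintype.bijective_iff_injective_and_card _).mpr ⟨hinj, ZMod.card _⟩),
    fun i => ?_⟩
  have hval : (i + 1).val = (i.val + 1) % Fintype.card α := by
    rw [← ZMod.val_natCast, Nat.cast_succ, ZMod.natCast_zmod_val]
  simp only [Equiv.ofBijective_apply, hval, hmod, iterate_succ_apply']

theorem SimpleGraph.exists_walk_support_iff {V : Type*} {G : SimpleGraph V} (f : ℕ → V)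
    (hf : ∀ k, G.Adj (f k) (f (k + 1))) (m : ℕ) :
    ∃ p : G.Walk (f 0) (f m), ∀ v, v ∈ p.support ↔ ∃ j ≤ m, f j = v := by
  induction m with
  | zero => exact ⟨.nil, by simp [eq_comm]⟩
  | succ m ih =>
    obtain ⟨p, hp⟩ := ih
    refine ⟨p.concat (hf m), fun v => ?_⟩
    simp only [Walk.support_concat, List.mem_append, hp, List.mem_singleton]
    constructor
    · rintro (⟨j, hj, rfl⟩ | rfl)
      exacts [⟨j, by omega, rfl⟩, ⟨m + 1, le_rfl, rfl⟩]
    · rintro ⟨j, hj, rfl⟩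
      rcases Nat.lt_or_eq_of_le hj with hj | rfl
      exacts [.inl ⟨j, by omega, rfl⟩, .inr rfl]

theorem ZMod.ne_zero_iff_exists_natCast_add_one {n : ℕ} [NeZero n] {x : ZMod n} :
    x ≠ 0 ↔ ∃ j < n - 1, (j : ZMod n) + 1 = x := by
  constructor
  · intro hx
    have hval : x.val ≠ 0 := (ZMod.val_eq_zero x).not.mpr hx
    refine ⟨x.val - 1, by have := x.val_lt; omega, ?_⟩
    rw [← Nat.cast_add_one, Nat.sub_one_add_one hval, ZMod.natCast_zmod_val]
  · rintro ⟨j, hj, rfl⟩ h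
    rw [← Nat.cast_add_one, ← ZMod.val_eq_zero, ZMod.val_natCast, Nat.mod_eq_of_lt (by omega)] at h
    omega

section HamiltonianCycle

variable {V : Type*} {n : ℕ} {H : Finset (V × V)} (e : ZMod n ≃ V)

theorem dPath_of_hamiltonian (hH : ∀ i, (e i, e (i + 1)) ∈ H) (i : ZMod n) (m : ℕ) :
    DPath H (e i) (e (i + m)) := by
  induction m with
  | zero => rw [Nat.cast_zero, add_zero]; exact .refl
  | succ m ih => rw [Nat.cast_add_one, ← add_assoc]; exact ih.tail (hH _)

theorem stronglyConnected_of_hamiltonian [NeZero n] (hH : ∀ i, (e i, e (i + 1)) ∈ H) :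
    StronglyConnected H := fun u v => by
  simpa using dPath_of_hamiltonian e hH (e.symm u) (e.symm v - e.symm u).val

theorem underlying_adj_of_hamiltonian [Nontrivial (ZMod n)] (hH : ∀ i, (e i, e (i + 1)) ∈ H)
    (i : ZMod n) : (underlying H).Adj (e i) (e (i + 1)) :=
  ⟨e.injective.ne (by simp), .inl (hH i)⟩

theorem not_isArticulationPoint_of_hamiltonian (hn : 2 ≤ n) (hH : ∀ i, (e i, e (i + 1)) ∈ H)
    (a : V) : ¬ IsArticulationPoint (underlying H) a := by
  have : NeZero n := ⟨by omega⟩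
  have : Nontrivial (ZMod n) := ZMod.nontrivial_iff.mpr (by omega)
  -- the walk e (a + 1), e (a + 2), …, e (a + n - 1) visits every vertex except a
  obtain ⟨p, hp⟩ := SimpleGraph.exists_walk_support_iff (fun k : ℕ => e (e.symm a + (k + 1)))
    (fun k => by simpa [add_assoc] using underlying_adj_of_hamiltonian e hH (e.symm a + (k + 1)))
    (n - 2)
  have hsupp : {v | v ∈ p.support} = {v | v ≠ a} := by
    ext v
    rw [Set.mem_ofPred_eq, hp, Set.mem_ofPred_eq, ← e.symm.injective.ne_iff, ← sub_ne_zero,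
      ZMod.ne_zero_iff_exists_natCast_add_one]
    simp only [← e.eq_symm_apply, eq_sub_iff_add_eq']
    exact exists_congr fun j => and_congr_left' (by omega)
  exact not_not.mpr (hsupp ▸ p.connected_induce_support)

theorem stronglyBiconnected_of_hamiltonian (hn : 2 ≤ n) (hH : ∀ i, (e i, e (i + 1)) ∈ H) :
    StronglyBiconnected H :=
  have : NeZero n := ⟨by omega⟩
  ⟨stronglyConnected_of_hamiltonian e hH, not_isArticulationPoint_of_hamiltonian e hn hH⟩

def cycleEdges [NeZero n] : Finset (V × V) :=
  Finset.univ.map ⟨fun i => (e i, e (i + 1)), fun _ _ h => e.injective (congrArg Prod.fst h)⟩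

theorem mem_cycleEdges [NeZero n] (i : ZMod n) : (e i, e (i + 1)) ∈ cycleEdges e :=
  Finset.mem_map_of_mem _ (Finset.mem_univ i)

theorem cycleEdges_subset [NeZero n] (hH : ∀ i, (e i, e (i + 1)) ∈ H) : cycleEdges e ⊆ H := by
  intro p hp
  obtain ⟨i, -, rfl⟩ := Finset.mem_map.mp hp
  exact hH i

theorem card_cycleEdges [NeZero n] : (cycleEdges e).card = n := by
  simp [cycleEdges, ZMod.card]

end HamiltonianCycle

section FunctionalGraph

variable {V : Type*} {H : Finset (V × V)}

theorem StronglyConnected.exists_mem [Nontrivial V] (hH : StronglyConnected H) (u : V) :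
    ∃ w, (u, w) ∈ H := by
  obtain ⟨v, hv⟩ := exists_ne u
  rcases (hH u v).cases_head with h | ⟨w, hw, -⟩
  exacts [absurd h.symm hv, ⟨w, hw⟩]

theorem exists_fun_mem_iff_of_card_le [Fintype V] (hout : ∀ u, ∃ w, (u, w) ∈ H)
    (hcard : H.card ≤ Fintype.card V) : ∃ σ : V → V, ∀ u w, (u, w) ∈ H ↔ w = σ u := by
  choose σ hσ using hout
  refine ⟨σ, fun u w => ⟨fun hw => ?_, fun h => h ▸ hσ u⟩⟩
  exact congrArg Prod.snd <| Finset.inj_on_of_surj_on_of_card_le (t := Finset.univ)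
    (fun p _ => p.1) (fun _ _ => Finset.mem_univ _) (fun u _ => ⟨_, hσ u, rfl⟩) hcard hw (hσ u) rfl

theorem DPath.exists_iterate_eq {σ : V → V} (hσ : ∀ u w, (u, w) ∈ H ↔ w = σ u) {u v : V}
    (h : DPath H u v) : ∃ m, σ^[m] u = v := by
  induction h with
  | refl => exact ⟨0, rfl⟩
  | tail _ hbc ih =>
    obtain ⟨m, rfl⟩ := ih
    exact ⟨m + 1, (Function.iterate_succ_apply' σ m u).trans ((hσ _ _).mp hbc).symm⟩

theorem exists_hamiltonian_of_stronglyConnected_of_card_le [Fintype V]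
    (hn : 2 ≤ Fintype.card V) (hH : StronglyConnected H) (hcard : H.card ≤ Fintype.card V) :
    ∃ e : ZMod (Fintype.card V) ≃ V, ∀ i, (e i, e (i + 1)) ∈ H := by
  have : Nontrivial V := Fintype.one_lt_card_iff_nontrivial.mp hn
  obtain ⟨σ, hσ⟩ := exists_fun_mem_iff_of_card_le hH.exists_mem hcard
  obtain ⟨e, he⟩ := Function.exists_zmod_equiv_iterate_of_forall_exists_iterate_eq σ
    fun u v => (hH u v).exists_iterate_eq hσ
  exact ⟨e, fun i => (hσ _ _).mpr (he i)⟩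

end FunctionalGraph

theorem stmt_8_general {V : Type*} [Fintype V] (hn : 3 ≤ Fintype.card V)
    (E : Finset (V × V)) :
    (∃ H ⊆ E, StronglyBiconnected H ∧ H.card = Fintype.card V) ↔
      (∃ e : ZMod (Fintype.card V) ≃ V, ∀ i, (e i, e (i + 1)) ∈ E) := by
  have : NeZero (Fintype.card V) := ⟨by omega⟩
  constructor
  · rintro ⟨H, hHE, ⟨hH, -⟩, hcard⟩
    obtain ⟨e, he⟩ := exists_hamiltonian_of_stronglyConnected_of_card_le (by omega) hH hcard.le
    exact ⟨e, fun i => hHE (he i)⟩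
  · rintro ⟨e, he⟩
    exact ⟨cycleEdges e, cycleEdges_subset e he,
      stronglyBiconnected_of_hamiltonian e (by omega) (mem_cycleEdges e), card_cycleEdges e⟩

/-- A loopless strongly biconnected directed graph on $n ≥ 3$ vertices has a
strongly biconnected spanning subgraph with exactly $n$ edges if and only if
it has a Hamiltonian directed cycle. -/
theorem stmt_8 {V : Type*} [Fintype V] (hn : 3 ≤ Fintype.card V)
    (E : Finset (V × V)) (hloop : ∀ v : V, (v, v) ∉ E)
    (hG : StronglyBiconnected E) :
    (∃ H ⊆ E, StronglyBiconnected H ∧ H.card = Fintype.card V) ↔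
      (∃ e : ZMod (Fintype.card V) ≃ V, ∀ i, (e i, e (i + 1)) ∈ E) :=
  stmt_8_general hn E
end
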